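/- Let n be even, m ≥ 1, and let G : 𝔽₂ⁿ → 𝔽₂^{m+1} be a bent function. Let F₁, …, F_k : 𝔽₂ⁿ → 𝔽₂ᵐ be pairwise extended-affine inequivalent bent functions such that for every bent function H : 𝔽₂ⁿ → 𝔽₂^{m+1} that is extended-affine equivalent to G, the (n,m)-function formed by the first m coordinate functions of H is extended-affine equivalent to some Fᵢ. Then |{ H : 𝔽₂ⁿ → 𝔽₂^{m+1} | H is extended-affine equivalent to G }| = 2^{n+1} · Σ_{i=1}^{k} |{ F : 𝔽₂ⁿ → 𝔽₂ᵐ | F is extended-affine equivalent to Fᵢ }| · |{ f : 𝔽₂ⁿ → 𝔽₂ | f is affine-free and (Fᵢ, f) is extended-affine equivalent to G }|. -/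

import Mathlib

/-!
An EA-map `x ↦ A₁ (G (A₂ x)) + A₃ x` only permutes the Walsh spectrum of `G` up to signs,
so every member `H` of the class of `G` is bent, and by pairwise inequivalence its truncation
lies in the class of exactly one `Fᵢ`. Writing `H = (F, f)`, the number of `f` with
`(F, f) ~ G` is the same for all `F ~ Fᵢ`: an EA-map from `F` to `Fᵢ`, extended by the identity
on the last coordinate, carries `(F, f ∘ A₂)` to `(Fᵢ, f)`. Finally, adding an affine Boolean
function to `f` stays in the class, and every `f` is uniquely an affine-free function plus one of
the `2^{n+1}` affine ones.
-/

open Finset Function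

/-- The vector space `𝔽₂ⁿ`. -/
abbrev BV (n : ℕ) := Fin n → ZMod 2

/-- The standard dot product `⟨u,v⟩ = Σᵢ uᵢ vᵢ` on `𝔽₂ⁿ`. -/
def bdot {n : ℕ} (u v : BV n) : ZMod 2 := ∑ i, u i * v i

/-- The Walsh coefficient `W_F(a,b) = Σ_x (−1)^{⟨b,F(x)⟩ ⊕ ⟨a,x⟩}` of an `(n,m)`-function. -/
def walsh {n m : ℕ} (F : BV n → BV m) (a : BV n) (b : BV m) : ℤ :=
  ∑ x : BV n, (-1 : ℤ) ^ ((bdot b (F x) + bdot a x).val)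

/-- An `(n,m)`-function is bent if all Walsh coefficients `W_F(a,b)`, `b ≠ 0`, equal `±2^{n/2}`. -/
def IsBent {n m : ℕ} (F : BV n → BV m) : Prop :=
  ∀ (a : BV n) (b : BV m), b ≠ 0 →
    walsh F a b = 2 ^ (n / 2) ∨ walsh F a b = -2 ^ (n / 2)

/-- A map `𝔽₂ⁿ → 𝔽₂ᵐ` is affine if it is a linear map followed by a translation. -/
def IsAffineF {n m : ℕ} (A : BV n → BV m) : Prop :=
  ∃ (L : BV n →ₗ[ZMod 2] BV m) (t : BV m), ∀ x, A x = L x + t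

/-- Extended-affine equivalence of `(n,m)`-functions: `F = A₁ ∘ F' ∘ A₂ + A₃` with `A₁`
a linear automorphism of `𝔽₂ᵐ`, `A₂` an affine automorphism of `𝔽₂ⁿ`, `A₃` affine. -/
def EAequiv {n m : ℕ} (F F' : BV n → BV m) : Prop :=
  ∃ (A₁ : BV m →ₗ[ZMod 2] BV m) (A₂ : BV n → BV n) (A₃ : BV n → BV m),
    Bijective A₁ ∧ IsAffineF A₂ ∧ Bijective A₂ ∧ IsAffineF A₃ ∧
    ∀ x, F x = A₁ (F' (A₂ x)) + A₃ x

/-- The extension of an `(n,m)`-function `F` by a Boolean function `f`: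
`x ↦ (F(x), f(x)) : 𝔽₂ⁿ → 𝔽₂^{m+1}`. -/
def extendF {n m : ℕ} (F : BV n → BV m) (f : BV n → ZMod 2) : BV n → BV (m + 1) :=
  fun x => Fin.snoc (F x) (f x)

/-- The `(n,m)`-function formed by the first `m` coordinate functions of an
`(n,m+1)`-function. -/
def truncateF {n m : ℕ} (G : BV n → BV (m + 1)) : BV n → BV m :=
  fun x i => G x i.castSucc

/-- A Boolean function is affine-free (no constant or degree-one terms in its ANF) iff
`f(0) = 0` and `f(eᵢ) = 0` for all standard basis vectors `eᵢ`. -/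
def AffineFree {n : ℕ} (f : BV n → ZMod 2) : Prop :=
  f 0 = 0 ∧ ∀ i : Fin n, f (Pi.single i 1) = 0

open Matrix

section EAEquivalence

variable {n m : ℕ}

theorem isAffineF_iff {A : BV n → BV m} :
    IsAffineF A ↔ ∃ φ : BV n →ᵃ[ZMod 2] BV m, ⇑φ = A := by
  constructor
  · rintro ⟨L, t, hA⟩
    exact ⟨L.toAffineMap + AffineMap.const (ZMod 2) _ t, funext fun x => by simp [hA]⟩
  · rintro ⟨φ, rfl⟩
    exact ⟨φ.linear, φ 0, fun x => congrFun φ.decomp x⟩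

theorem eaequiv_iff {F F' : BV n → BV m} :
    EAequiv F F' ↔ ∃ (A₁ : BV m ≃ₗ[ZMod 2] BV m) (A₂ : BV n ≃ᵃ[ZMod 2] BV n)
      (A₃ : BV n →ᵃ[ZMod 2] BV m), ∀ x, F x = A₁ (F' (A₂ x)) + A₃ x := by
  simp only [EAequiv, isAffineF_iff]
  constructor
  · rintro ⟨A₁, _, _, hA₁, ⟨φ₂, rfl⟩, hφ₂, ⟨φ₃, rfl⟩, h⟩
    exact ⟨.ofBijective A₁ hA₁, .ofBijective hφ₂, φ₃, h⟩
  · rintro ⟨A₁, A₂, A₃, h⟩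
    exact ⟨A₁, A₂, A₃, A₁.bijective, ⟨A₂, rfl⟩, A₂.bijective, ⟨A₃, rfl⟩, h⟩

theorem EAequiv.symm {F F' : BV n → BV m} (h : EAequiv F F') : EAequiv F' F := by
  obtain ⟨A₁, A₂, A₃, h⟩ := eaequiv_iff.1 h
  refine eaequiv_iff.2 ⟨A₁.symm, A₂.symm,
    -(A₁.symm.toLinearMap.toAffineMap.comp (A₃.comp A₂.symm.toAffineMap)), fun y => ?_⟩
  simp [h]

theorem EAequiv.trans {F F' F'' : BV n → BV m} (h : EAequiv F F') (h' : EAequiv F' F'') :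
    EAequiv F F'' := by
  obtain ⟨A₁, A₂, A₃, h⟩ := eaequiv_iff.1 h
  obtain ⟨B₁, B₂, B₃, h'⟩ := eaequiv_iff.1 h'
  exact eaequiv_iff.2 ⟨B₁.trans A₁, A₂.trans B₂,
    A₁.toLinearMap.toAffineMap.comp (B₃.comp A₂.toAffineMap) + A₃,
    fun x => by simp [h, h', add_assoc]⟩

end EAEquivalence

section Bent

theorem exists_dotProduct_affineMap_eq {R ι κ : Type*} [CommRing R] [Fintype ι] [DecidableEq ι]
    [Fintype κ] (φ : (ι → R) →ᵃ[R] (κ → R)) (b : κ → R) :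
    ∃ (u : ι → R) (c : R), ∀ x, b ⬝ᵥ φ x = u ⬝ᵥ x + c :=
  ⟨b ᵥ* LinearMap.toMatrix' φ.linear, b ⬝ᵥ φ 0, fun x => by
    rw [congrFun φ.decomp x, Pi.add_apply, dotProduct_add, ← dotProduct_mulVec,
      LinearMap.toMatrix'_mulVec]⟩

theorem exists_ne_zero_dotProduct_linearEquiv_eq {R ι : Type*} [CommRing R] [Fintype ι]
    [DecidableEq ι] (A : (ι → R) ≃ₗ[R] (ι → R)) {b : ι → R} (hb : b ≠ 0) :
    ∃ b' ≠ 0, ∀ y, b ⬝ᵥ A y = b' ⬝ᵥ y := by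
  have hA : ∀ y, b ⬝ᵥ A y = (b ᵥ* LinearMap.toMatrix' A.toLinearMap) ⬝ᵥ y := fun y => by
    rw [← dotProduct_mulVec, LinearMap.toMatrix'_mulVec, LinearEquiv.coe_coe]
  refine ⟨_, fun h0 => hb (dotProduct_eq_zero _ fun z => ?_), hA⟩
  rw [← A.apply_symm_apply z, hA, h0, zero_dotProduct]

theorem neg_one_pow_val_add (u v : ZMod 2) :
    (-1 : ℤ) ^ (u + v).val = (-1) ^ u.val * (-1) ^ v.val := by
  fin_cases u <;> fin_cases v <;> rfl

variable {n m : ℕ}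

theorem walsh_eq_sum_dotProduct (F : BV n → BV m) (a : BV n) (b : BV m) :
    walsh F a b = ∑ x, (-1) ^ (b ⬝ᵥ F x + a ⬝ᵥ x).val :=
  rfl

theorem isBent_iff_abs_walsh {F : BV n → BV m} :
    IsBent F ↔ ∀ a (b : BV m), b ≠ 0 → |walsh F a b| = 2 ^ (n / 2) := by
  simp only [IsBent, abs_eq (by positivity : (0 : ℤ) ≤ 2 ^ (n / 2))]

theorem exists_abs_walsh_eq {H G : BV n → BV m} {A₁ : BV m ≃ₗ[ZMod 2] BV m}
    {A₂ : BV n ≃ᵃ[ZMod 2] BV n} {A₃ : BV n →ᵃ[ZMod 2] BV m}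
    (h : ∀ x, H x = A₁ (G (A₂ x)) + A₃ x) (a : BV n) {b : BV m} (hb : b ≠ 0) :
    ∃ a' b', b' ≠ 0 ∧ |walsh H a b| = |walsh G a' b'| := by
  obtain ⟨b', hb', h₁⟩ := exists_ne_zero_dotProduct_linearEquiv_eq A₁ hb
  obtain ⟨u, c, h₃⟩ := exists_dotProduct_affineMap_eq A₃ b
  obtain ⟨a', c', h₂⟩ := exists_dotProduct_affineMap_eq A₂.symm.toAffineMap (a + u)
  have hexp : ∀ x, b ⬝ᵥ H x + a ⬝ᵥ x = b' ⬝ᵥ G (A₂ x) + a' ⬝ᵥ A₂ x + (c + c') := fun x => by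
    have h₂x := h₂ (A₂ x)
    rw [AffineEquiv.coe_toAffineMap, AffineEquiv.symm_apply_apply, add_dotProduct] at h₂x
    rw [h, dotProduct_add, h₁, h₃]
    linear_combination h₂x
  have hwalsh : walsh H a b = (-1) ^ (c + c').val * walsh G a' b' := by
    rw [walsh_eq_sum_dotProduct, walsh_eq_sum_dotProduct, Finset.mul_sum]
    refine Fintype.sum_equiv A₂.toEquiv _ _ fun x => ?_
    rw [hexp, neg_one_pow_val_add, mul_comm]
    rfl
  refine ⟨a', b', hb', ?_⟩
  rw [hwalsh, abs_mul, abs_pow, abs_neg, abs_one, one_pow, one_mul]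

theorem IsBent.of_eaequiv {H G : BV n → BV m} (h : EAequiv H G) (hG : IsBent G) :
    IsBent H := by
  obtain ⟨A₁, A₂, A₃, h⟩ := eaequiv_iff.1 h
  rw [isBent_iff_abs_walsh] at hG ⊢
  intro a b hb
  obtain ⟨a', b', hb', hab⟩ := exists_abs_walsh_eq h a hb
  rw [hab, hG a' b' hb']

end Bent

section Extension

def snocLinearEquiv (R : Type*) [Semiring R] (m : ℕ) :
    ((Fin m → R) × R) ≃ₗ[R] (Fin (m + 1) → R) where
  toFun p := Fin.snoc p.1 p.2
  invFun y := (Fin.init y, y (Fin.last m))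
  map_add' p q := by ext j; refine Fin.lastCases ?_ (fun i => ?_) j <;> simp
  map_smul' r p := by ext j; refine Fin.lastCases ?_ (fun i => ?_) j <;> simp
  left_inv p := by simp
  right_inv y := Fin.snoc_init_self y

variable {n m : ℕ}

theorem extendF_apply (F : BV n → BV m) (f : BV n → ZMod 2) (x : BV n) :
    extendF F f x = snocLinearEquiv (ZMod 2) m (F x, f x) :=
  rfl

theorem eaequiv_extendF {F F' : BV n → BV m} {A₁ : BV m ≃ₗ[ZMod 2] BV m}
    {A₂ : BV n ≃ᵃ[ZMod 2] BV n} {A₃ : BV n →ᵃ[ZMod 2] BV m}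
    (h : ∀ x, F x = A₁ (F' (A₂ x)) + A₃ x) {f f' : BV n → ZMod 2} (ℓ : BV n →ᵃ[ZMod 2] ZMod 2)
    (hf : ∀ x, f x = f' (A₂ x) + ℓ x) : EAequiv (extendF F f) (extendF F' f') := by
  let e := snocLinearEquiv (ZMod 2) m
  refine eaequiv_iff.2 ⟨e.symm.trans ((A₁.prodCongr (LinearEquiv.refl _ _)).trans e), A₂,
    e.toLinearMap.toAffineMap.comp (A₃.prod ℓ), fun x => ?_⟩
  simp [extendF_apply, h, hf, e, ← map_add]

theorem eaequiv_extendF_add_affineMap_iff (F : BV n → BV m) (G : BV n → BV (m + 1))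
    (f : BV n → ZMod 2) (ℓ : BV n →ᵃ[ZMod 2] ZMod 2) :
    EAequiv (extendF F (f + ⇑ℓ)) G ↔ EAequiv (extendF F f) G := by
  have h : EAequiv (extendF F (f + ⇑ℓ)) (extendF F f) :=
    eaequiv_extendF (A₁ := .refl _ _) (A₂ := .refl _ _) (A₃ := 0) (by simp) ℓ (by simp)
  exact ⟨h.symm.trans, h.trans⟩

def extendEquiv (n m : ℕ) : (BV n → BV m) × (BV n → ZMod 2) ≃ (BV n → BV (m + 1)) :=
  (Equiv.arrowProdEquivProdArrow _ _ _).symm.trans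
    (Equiv.arrowCongr (Equiv.refl _) (snocLinearEquiv (ZMod 2) m).toEquiv)

theorem extendEquiv_apply (p : (BV n → BV m) × (BV n → ZMod 2)) :
    extendEquiv n m p = extendF p.1 p.2 :=
  rfl

theorem extendEquiv_symm_apply_fst (H : BV n → BV (m + 1)) :
    ((extendEquiv n m).symm H).1 = truncateF H :=
  rfl

end Extension

section Counting

theorem card_subtype_eq_sum_of_existsUnique {α ι : Type*} [Finite α] [Fintype ι]
    {P : α → Prop} {Q : ι → α → Prop} (h : ∀ a, P a → ∃! i, Q i a) :
    Nat.card {a // P a} = ∑ i, Nat.card {a // P a ∧ Q i a} := by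
  let e : {a // P a} ≃ Σ i, {a // P a ∧ Q i a} :=
    { toFun a := ⟨(h a a.2).choose, a, a.2, (h a a.2).choose_spec.1⟩
      invFun s := ⟨s.2, s.2.2.1⟩
      left_inv _ := rfl
      right_inv := fun ⟨i, a, ha, hi⟩ => by
        obtain rfl := ((h a ha).choose_spec.2 i hi).symm
        rfl }
  rw [Nat.card_congr e, Nat.card_sigma]

theorem card_subtype_prod_of_card_fiber {α β : Type*} [Finite α] [Finite β]
    {P : α → Prop} {R : α → β → Prop} {c : ℕ} (h : ∀ a, P a → Nat.card {b // R a b} = c) :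
    Nat.card {p : α × β // P p.1 ∧ R p.1 p.2} = Nat.card {a // P a} * c := by
  have := Fintype.ofFinite {a // P a}
  let e : {p : α × β // P p.1 ∧ R p.1 p.2} ≃ Σ a : {a // P a}, {b // R a b} :=
    { toFun p := ⟨⟨p.1.1, p.2.1⟩, p.1.2, p.2.2⟩
      invFun s := ⟨(s.1, s.2), s.1.2, s.2.2⟩
      left_inv _ := rfl
      right_inv _ := rfl }
  rw [Nat.card_congr e, Nat.card_sigma, Finset.sum_congr rfl fun (a : {a // P a}) _ => h a a.2,
    Finset.sum_const, Finset.card_univ, Nat.card_eq_fintype_card, smul_eq_mul]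

variable {n m : ℕ}

theorem card_eaequiv_extendF_eq {F F₀ : BV n → BV m} (G : BV n → BV (m + 1))
    (hF : EAequiv F F₀) :
    Nat.card {f // EAequiv (extendF F f) G} = Nat.card {f // EAequiv (extendF F₀ f) G} := by
  obtain ⟨A₁, A₂, A₃, h⟩ := eaequiv_iff.1 hF
  refine (Nat.card_congr ((Equiv.arrowCongr A₂.symm.toEquiv (Equiv.refl _)).subtypeEquiv
    fun f => ?_)).symm
  have hext : EAequiv (extendF F (f ∘ A₂)) (extendF F₀ f) :=
    eaequiv_extendF h 0 fun x => by simp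
  exact ⟨hext.trans, hext.symm.trans⟩

theorem card_eaequiv_truncateF (G : BV n → BV (m + 1)) (F₀ : BV n → BV m) :
    Nat.card {H // EAequiv H G ∧ EAequiv (truncateF H) F₀} =
      Nat.card {F // EAequiv F F₀} * Nat.card {f // EAequiv (extendF F₀ f) G} := by
  rw [← card_subtype_prod_of_card_fiber fun F hF => card_eaequiv_extendF_eq G hF]
  exact Nat.card_congr ((extendEquiv n m).symm.subtypeEquiv fun H => by
    rw [← extendEquiv_apply, Equiv.apply_symm_apply, extendEquiv_symm_apply_fst, and_comm])

end Counting

section AffineFree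

variable {n : ℕ}

def affineFn (n : ℕ) (wc : BV n × ZMod 2) : BV n →ᵃ[ZMod 2] ZMod 2 :=
  (dotProductEquiv (ZMod 2) (Fin n) wc.1).toAffineMap + AffineMap.const (ZMod 2) (BV n) wc.2

@[simp]
theorem affineFn_apply (wc : BV n × ZMod 2) (x : BV n) : affineFn n wc x = wc.1 ⬝ᵥ x + wc.2 :=
  rfl

def affineCoeffs (f : BV n → ZMod 2) : BV n × ZMod 2 :=
  (fun i => f (Pi.single i 1) - f 0, f 0)

theorem affineFree_sub_affineFn (f : BV n → ZMod 2) :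
    AffineFree (f - ⇑(affineFn n (affineCoeffs f))) :=
  ⟨by simp [affineCoeffs], fun i => by simp [affineCoeffs]⟩

theorem affineCoeffs_add_affineFn {f : BV n → ZMod 2} (hf : AffineFree f) (wc : BV n × ZMod 2) :
    affineCoeffs (f + ⇑(affineFn n wc)) = wc := by
  ext i <;> simp [affineCoeffs, hf.1, hf.2]

def affineFreeDecomp (n : ℕ) :
    {f : BV n → ZMod 2 // AffineFree f} × (BV n × ZMod 2) ≃ (BV n → ZMod 2) where
  toFun p := p.1.1 + ⇑(affineFn n p.2)
  invFun f := (⟨_, affineFree_sub_affineFn f⟩, affineCoeffs f)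
  left_inv := fun ⟨⟨f, hf⟩, wc⟩ => by simp [affineCoeffs_add_affineFn hf]
  right_inv f := sub_add_cancel _ _

theorem card_eq_two_pow_mul_card_affineFree {R : (BV n → ZMod 2) → Prop}
    (hR : ∀ f (ℓ : BV n →ᵃ[ZMod 2] ZMod 2), R (f + ⇑ℓ) ↔ R f) :
    Nat.card {f // R f} = 2 ^ (n + 1) * Nat.card {f // AffineFree f ∧ R f} := by
  let e : {f // R f} ≃ {f // AffineFree f ∧ R f} × (BV n × ZMod 2) :=
    (((affineFreeDecomp n).subtypeEquiv (p := fun p => R p.1.1) fun _ => (hR _ _).symm).symm.trans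
      (Equiv.prodSubtypeFstEquivSubtypeProd (p := fun f : {f // AffineFree f} => R f.1))).trans
      (Equiv.prodCongr (Equiv.subtypeSubtypeEquivSubtypeInter _ R) (Equiv.refl _))
  rw [Nat.card_congr e, Nat.card_prod, mul_comm]
  simp [pow_succ]

end AffineFree

theorem card_of_equivalence_class_general
    {n m k : ℕ}
    (G : BV n → BV (m + 1)) (hG : IsBent G)
    (Fs : Fin k → (BV n → BV m))
    (hpair : ∀ i j, i ≠ j → ¬ EAequiv (Fs i) (Fs j))
    (hcover : ∀ H : BV n → BV (m + 1), IsBent H → EAequiv H G →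
      ∃ i, EAequiv (truncateF H) (Fs i)) :
    Nat.card {H : BV n → BV (m + 1) // EAequiv H G} =
      2 ^ (n + 1) *
        ∑ i : Fin k,
          Nat.card {F : BV n → BV m // EAequiv F (Fs i)} *
            Nat.card {f : BV n → ZMod 2 //
              AffineFree f ∧ EAequiv (extendF (Fs i) f) G} := by
  have hunique : ∀ H, EAequiv H G → ∃! i, EAequiv (truncateF H) (Fs i) := fun H hH => by
    obtain ⟨i, hi⟩ := hcover H (hG.of_eaequiv hH) hH
    exact ⟨i, hi, fun j hj => by_contra fun hji => hpair j i hji (hj.symm.trans hi)⟩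
  rw [card_subtype_eq_sum_of_existsUnique hunique, Finset.mul_sum]
  refine Finset.sum_congr rfl fun i _ => ?_
  rw [card_eaequiv_truncateF, card_eq_two_pow_mul_card_affineFree
    (eaequiv_extendF_add_affineMap_iff (Fs i) G)]
  ring

/-- The cardinality of the EA-equivalence class of an `(n,m+1)`-bent function `G` equals
`2^{n+1} · Σᵢ |Cᵢᵐ| · |𝓕(Cᵢᵐ, class of G)|`, where `F₁, …, F_k` are pairwise
EA-inequivalent `(n,m)`-bent representatives covering the truncations of all members of
the class of `G`. -/
theorem card_of_equivalence_class
    {n m k : ℕ} (hev : Even n) (hm : 1 ≤ m)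
    (G : BV n → BV (m + 1)) (hG : IsBent G)
    (Fs : Fin k → (BV n → BV m)) (hFs : ∀ i, IsBent (Fs i))
    (hpair : ∀ i j, i ≠ j → ¬ EAequiv (Fs i) (Fs j))
    (hcover : ∀ H : BV n → BV (m + 1), IsBent H → EAequiv H G →
      ∃ i, EAequiv (truncateF H) (Fs i)) :
    Nat.card {H : BV n → BV (m + 1) // EAequiv H G} =
      2 ^ (n + 1) *
        ∑ i : Fin k,
          Nat.card {F : BV n → BV m // EAequiv F (Fs i)} *
            Nat.card {f : BV n → ZMod 2 //
              AffineFree f ∧ EAequiv (extendF (Fs i) f) G} :=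
  card_of_equivalence_class_general G hG Fs hpair hcover
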